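/- Evaluated recurrence system (the coefficient-wise form of the functional equation (3.16) combined with Lemma 3.3): for all integers n ≥ 1 and N ≥ 1, f_{n+1}(−q^{2N}) + f_{n−1}(−q^{2N}) = −(t₁ q^{−2N} + t₁^{−1} q^{2N}) f_n(−q^{2N}) + t̄₁ ∑_{p=1}^{N−1} {2p} f_n(−q^{2(2p−N)}) − t̄₂ ∑_{p=0}^{N−1} {2p+1} f_n(−q^{2(2p−N+1)}). -/

import Mathlib

/- STATEMENT 8: Evaluated recurrence system: for all integers n ≥ 1 and N ≥ 1,
f_{n+1}(−q^{2N}) + f_{n−1}(−q^{2N}) = −(t₁ q^{−2N} + t₁^{−1} q^{2N}) f_n(−q^{2N})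
 + t̄₁ ∑_{p=1}^{N−1} {2p} f_n(−q^{2(2p−N)}) − t̄₂ ∑_{p=0}^{N−1} {2p+1} f_n(−q^{2(2p−N+1)}),
where f_n = ∑_{p=1}^{n} a_{n,p}(U^p − U^{−p}) and f_n(c) is its evaluation at U = c. -/

noncomputable section

/-- The field `F = ℚ(q, t₁, t₂)` of rational functions in three indeterminates. -/
abbrev F : Type := FractionRing (MvPolynomial (Fin 3) ℚ)

def q : F := algebraMap (MvPolynomial (Fin 3) ℚ) F (MvPolynomial.X 0)
def t1 : F := algebraMap (MvPolynomial (Fin 3) ℚ) F (MvPolynomial.X 1)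
def t2 : F := algebraMap (MvPolynomial (Fin 3) ℚ) F (MvPolynomial.X 2)

/-- `{m} = q^m − q^{−m}`. -/
def br (m : ℤ) : F := q ^ m - q ^ (-m)

/-- `A_p = (q^{2p−1}t₁^{−1} − q^{1−2p}t₁ + t₂ − t₂^{−1})/(q^{2p−1} − q^{1−2p})`. -/
def A (p : ℤ) : F :=
  (q ^ (2 * p - 1) * t1⁻¹ - q ^ (1 - 2 * p) * t1 + t2 - t2⁻¹) /
    (q ^ (2 * p - 1) - q ^ (1 - 2 * p))

/-- The coefficients `a_{n,p}` defined by the DAHA recurrence. -/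
def a : ℕ → ℤ → F
  | 0, _ => 0
  | 1, p => if p = 1 then 1 else if p = -1 then -1 else 0
  | n + 2, p =>
      A p * a (n + 1) (p - 1) + (A p - A (p + 1)) * a (n + 1) p
        + A (-p) * a (n + 1) (p + 1) - a n p

/-- The evaluation `f_n(c)` of the Laurent polynomial
`f_n = ∑_{p=1}^{n} a_{n,p}(U^p − U^{−p})` at `U = c`. -/
def fev (n : ℕ) (c : F) : F :=
  ∑ p ∈ Finset.Icc (1 : ℤ) (n : ℤ), a n p * (c ^ p - c ^ (-p))

/-!
Since `a_{n,-p} = -a_{n,p}` and `a_{n,p} = 0` for `p > n`, the recurrence for the coefficients,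
reindexed, says `f_{n+1} + f_{n-1} = ∑_p a_{n,p} L(U^p - U^{-p})` for a three-term operator `L`.
The right-hand side of the claim is a linear functional of `f_n`, so it suffices to check it on
each `U^p - U^{-p}`, whose values at the points `-q^{2m}` are `(-1)^p {2mp}`. Writing
`A_p = t₁⁻¹ + (t̄₂ - t̄₁ q^{1-2p}) / {2p-1}`, the identity splits into a `t₁⁻¹`-part, which is
`{a+b} + {a-b} = (q^b + q^{-b}) {a}`, and `t̄₁`- and `t̄₂`-parts, in which the product formula
`{a}{b} = (q^{a+b} + q^{-a-b}) - (q^{a-b} + q^{b-a})` turns both sums of the claim into sums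
that telescope: `{α} ∑_{j<N} (q^{2αj+β} + q^{-2αj-β}) = {(2N-1)α+β} + {α-β}`.
-/

open Finset

lemma sum_range_succ_eq_of_eq_zero {M : Type*} [AddCommMonoid M] {f : ℕ → M} {n : ℕ}
    (h₀ : f 0 = 0) (hn : f n = 0) : ∑ k ∈ range n, f (k + 1) = ∑ k ∈ range n, f k := by
  have h₁ := sum_range_succ' f n
  rw [sum_range_succ, hn, h₀, add_zero, add_zero] at h₁
  exact h₁.symm

section ZpowBracket

variable {K : Type*} [Field K]

def antiZpow (x : K) (m : ℤ) : K := x ^ m - x ^ (-m)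

def symZpow (x : K) (m : ℤ) : K := x ^ m + x ^ (-m)

lemma antiZpow_zero (x : K) : antiZpow x 0 = 0 := by simp [antiZpow]

lemma antiZpow_neg (x : K) (m : ℤ) : antiZpow x (-m) = -antiZpow x m := by
  simp [antiZpow]

variable {x : K}

lemma antiZpow_add (hx : x ≠ 0) (a b : ℤ) :
    antiZpow x (a + b) = x ^ a * antiZpow x b + x ^ (-b) * antiZpow x a := by
  simp only [antiZpow, neg_add, zpow_add₀ hx, zpow_neg]
  field_simp
  ring

lemma antiZpow_mul_antiZpow (hx : x ≠ 0) (a b : ℤ) :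
    antiZpow x a * antiZpow x b = symZpow x (a + b) - symZpow x (a - b) := by
  simp only [antiZpow, symZpow, neg_add, sub_eq_add_neg, zpow_add₀ hx, zpow_neg]
  field_simp
  ring

lemma antiZpow_mul_symZpow (hx : x ≠ 0) (a b : ℤ) :
    antiZpow x a * symZpow x b = antiZpow x (a + b) + antiZpow x (a - b) := by
  simp only [antiZpow, symZpow, neg_add, sub_eq_add_neg, zpow_add₀ hx, zpow_neg]
  field_simp
  ring

lemma antiZpow_mul_sum_symZpow (hx : x ≠ 0) (α β : ℤ) (N : ℕ) :
    antiZpow x α * ∑ j ∈ range N, symZpow x (2 * α * j + β)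
      = antiZpow x ((2 * N - 1) * α + β) + antiZpow x (α - β) := by
  induction N with
  | zero =>
    rw [sum_range_zero, mul_zero, Nat.cast_zero, show (2 * 0 - 1) * α + β = -(α - β) by ring,
      antiZpow_neg, neg_add_cancel]
  | succ N ih =>
    have h₁ : α + (2 * α * N + β) = (2 * ↑(N + 1) - 1) * α + β := by push_cast; ring
    have h₂ : α - (2 * α * N + β) = -((2 * N - 1) * α + β) := by ring
    rw [sum_range_succ, mul_add, ih, antiZpow_mul_symZpow hx, h₁, h₂, antiZpow_neg]
    ring

lemma antiZpow_neg_base (x : K) (m : ℤ) : antiZpow (-x) m = (-1) ^ m * antiZpow x m := by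
  have h : ((-1 : K) ^ m)⁻¹ = (-1) ^ m := by
    rw [← inv_zpow, inv_neg, inv_one]
  simp only [antiZpow, neg_eq_neg_one_mul x, mul_zpow, zpow_neg, mul_inv, h]
  ring

lemma antiZpow_zpow_base (x : K) (k m : ℤ) : antiZpow (x ^ k) m = antiZpow x (k * m) := by
  simp only [antiZpow, ← zpow_mul, mul_neg]

end ZpowBracket

lemma q_ne_zero : q ≠ 0 :=
  (map_ne_zero_iff _ (IsFractionRing.injective _ F)).2 (MvPolynomial.X_ne_zero 0)

lemma q_pow_ne_one {k : ℕ} (hk : k ≠ 0) : q ^ k ≠ 1 := by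
  intro h
  have hX : (MvPolynomial.X 0 : MvPolynomial (Fin 3) ℚ) ^ k = 1 :=
    IsFractionRing.injective _ F (by simpa [q] using h)
  have h2 := congrArg (MvPolynomial.eval fun _ => (2 : ℚ)) hX
  simp only [map_pow, MvPolynomial.eval_X, map_one] at h2
  exact (one_lt_pow₀ (by norm_num : (1 : ℚ) < 2) hk).ne' h2

lemma q_zpow_ne_one {m : ℤ} (hm : m ≠ 0) : q ^ m ≠ 1 := by
  rcases Int.natAbs_eq m with h | h <;> rw [h]
  · rw [zpow_natCast]
    exact q_pow_ne_one (by omega)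
  · rw [zpow_neg, zpow_natCast, inv_ne_one]
    exact q_pow_ne_one (by omega)

lemma br_eq_antiZpow (m : ℤ) : br m = antiZpow q m := rfl

lemma br_ne_zero {m : ℤ} (hm : m ≠ 0) : br m ≠ 0 := by
  intro h
  apply q_zpow_ne_one (mul_ne_zero two_ne_zero hm)
  rw [br, sub_eq_zero] at h
  rw [two_mul, zpow_add₀ q_ne_zero]
  nth_rw 2 [h]
  rw [← zpow_add₀ q_ne_zero, add_neg_cancel, zpow_zero]

lemma br_neg (m : ℤ) : br (-m) = -br m := antiZpow_neg q m

lemma A_eq (p : ℤ) : A p = t1⁻¹ + (t2 - t2⁻¹ - (t1 - t1⁻¹) * q ^ (1 - 2 * p)) / br (2 * p - 1) := by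
  have hb : br (2 * p - 1) ≠ 0 := br_ne_zero (by omega)
  rw [A, show 1 - 2 * p = -(2 * p - 1) by ring, ← br, div_eq_iff hb, add_mul, div_mul_cancel₀ _ hb]
  unfold br
  ring

lemma A_one_sub (p : ℤ) :
    A (1 - p) = t1⁻¹ - (t2 - t2⁻¹ - (t1 - t1⁻¹) * q ^ (2 * p - 1)) / br (2 * p - 1) := by
  rw [A_eq, show 2 * (1 - p) - 1 = -(2 * p - 1) by ring, show 1 - 2 * (1 - p) = 2 * p - 1 by ring,
    br_neg, div_neg, ← sub_eq_add_neg]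

lemma A_add_one (p : ℤ) :
    A (p + 1) = t1⁻¹ + (t2 - t2⁻¹ - (t1 - t1⁻¹) * q ^ (-(2 * p + 1))) / br (2 * p + 1) := by
  rw [A_eq, show 2 * (p + 1) - 1 = 2 * p + 1 by ring, show 1 - 2 * (p + 1) = -(2 * p + 1) by ring]

lemma A_add_A_one_sub (p : ℤ) : A p + A (1 - p) = t1 + t1⁻¹ := by
  have hb : br (2 * p - 1) ≠ 0 := br_ne_zero (by omega)
  rw [A_eq, A_one_sub, show 1 - 2 * p = -(2 * p - 1) by ring]
  field_simp
  unfold br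
  ring

lemma a_add_two (n : ℕ) (p : ℤ) :
    a (n + 2) p = A p * a (n + 1) (p - 1) + (A p - A (p + 1)) * a (n + 1) p
      + A (-p) * a (n + 1) (p + 1) - a n p := rfl

lemma a_neg (n : ℕ) (p : ℤ) : a n (-p) = -a n p := by
  induction n using Nat.twoStepInduction generalizing p with
  | zero => simp [a]
  | one =>
    simp only [a]
    split_ifs <;> first | omega | norm_num
  | more n ih₀ ih₁ =>
    have hA : A (-p) - A (-(p - 1)) = A p - A (p + 1) := by
      have h₁ := A_add_A_one_sub (p + 1)
      have h₂ := A_add_A_one_sub p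
      rw [show 1 - (p + 1) = -p by ring] at h₁
      rw [show 1 - p = -(p - 1) by ring] at h₂
      linear_combination h₁ - h₂
    rw [a_add_two, a_add_two, neg_neg, show -p - 1 = -(p + 1) by ring,
      show -p + 1 = -(p - 1) by ring, ih₁, ih₁, ih₁, ih₀]
    linear_combination -a (n + 1) p * hA

lemma a_zero (n : ℕ) : a n 0 = 0 := by
  have h := a_neg n 0
  rw [neg_zero, eq_neg_iff_add_eq_zero, ← two_mul, mul_eq_zero] at h
  exact h.resolve_left two_ne_zero

lemma a_eq_zero_of_lt {n : ℕ} {p : ℤ} (h : n < p) : a n p = 0 := by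
  induction n using Nat.twoStepInduction generalizing p with
  | zero => rfl
  | one =>
    simp only [a]
    split_ifs <;> first | omega | rfl
  | more n ih₀ ih₁ =>
    push_cast at h
    rw [a_add_two, ih₀ (by omega), ih₁ (by push_cast; omega), ih₁ (by push_cast; omega),
      ih₁ (by push_cast; omega)]
    ring

lemma fev_eq_sum_range {n M : ℕ} (h : n ≤ M) (c : F) :
    fev n c = ∑ k ∈ range M, a n (k + 1) * antiZpow c (k + 1) := by
  rw [fev, Int.Icc_eq_finset_map, sum_map]
  simp only [add_sub_cancel_right, Int.toNat_natCast, Function.Embedding.trans_apply,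
    Nat.castEmbedding_apply, addLeftEmbedding_apply, add_comm (1 : ℤ)]
  refine sum_subset (range_subset_range.2 h) fun k _ hk => ?_
  rw [mem_range, not_lt] at hk
  rw [a_eq_zero_of_lt (by omega), zero_mul]

/-- The image of `U ^ p - U ^ (-p)` under the difference operator whose action on coefficients
is the recurrence defining `a`, evaluated at `U = c`. -/
def opImage (p : ℤ) (c : F) : F :=
  A (p + 1) * antiZpow c (p + 1) + (A p - A (p + 1)) * antiZpow c p
    + A (1 - p) * antiZpow c (p - 1)

lemma fev_add_fev (n : ℕ) (c : F) :
    fev (n + 2) c + fev n c = ∑ k ∈ range (n + 2), a (n + 1) (k + 1) * opImage (k + 1) c := by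
  have hlow : ∑ k ∈ range (n + 2), a (n + 1) k * (A (k + 1) * antiZpow c (k + 1))
      = ∑ k ∈ range (n + 2), a (n + 1) (k + 1) * (A (k + 1 + 1) * antiZpow c (k + 1 + 1)) := by
    have h := sum_range_succ_eq_of_eq_zero (n := n + 2)
      (f := fun k : ℕ => a (n + 1) k * (A (k + 1) * antiZpow c (k + 1)))
      (by rw [Nat.cast_zero, a_zero, zero_mul])
      (by rw [a_eq_zero_of_lt (by push_cast; omega), zero_mul])
    push_cast at h
    exact h.symm
  have hup : ∑ k ∈ range (n + 2), a (n + 1) (k + 1 + 1) * (A (-(k + 1)) * antiZpow c (k + 1))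
      = ∑ k ∈ range (n + 2), a (n + 1) (k + 1) * (A (1 - (k + 1)) * antiZpow c (k + 1 - 1)) := by
    simp only [sub_add_cancel_right, add_sub_cancel_right]
    have h := sum_range_succ_eq_of_eq_zero (n := n + 2)
      (f := fun k : ℕ => a (n + 1) (k + 1) * (A (-k) * antiZpow c k))
      (by rw [Nat.cast_zero, antiZpow_zero, mul_zero, mul_zero])
      (by rw [a_eq_zero_of_lt (by push_cast; omega), zero_mul])
    push_cast at h
    exact h
  calc fev (n + 2) c + fev n c
      = ∑ k ∈ range (n + 2), (a (n + 1) k * (A (k + 1) * antiZpow c (k + 1))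
          + a (n + 1) (k + 1) * ((A (k + 1) - A (k + 1 + 1)) * antiZpow c (k + 1))
          + a (n + 1) (k + 1 + 1) * (A (-(k + 1)) * antiZpow c (k + 1))) := by
        rw [fev_eq_sum_range le_rfl, fev_eq_sum_range (by omega : n ≤ n + 2), ← sum_add_distrib]
        refine sum_congr rfl fun k _ => ?_
        rw [a_add_two, add_sub_cancel_right]
        ring
    _ = _ := by
        rw [sum_add_distrib, sum_add_distrib, hlow, hup, ← sum_add_distrib, ← sum_add_distrib]
        refine sum_congr rfl fun k _ => ?_
        rw [opImage]
        ring

lemma sum_br_odd_mul_br (p : ℤ) (N : ℕ) :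
    ∑ j ∈ range N, br (2 * j + 1) * br (2 * (2 * j - N + 1) * p)
      = (br (2 * N * (p + 1)) + br (2 * N * p)) / br (2 * p + 1)
        - (br (2 * N * (p - 1)) + br (2 * N * p)) / br (2 * p - 1) := by
  have hterm : ∀ j : ℕ, br (2 * j + 1) * br (2 * (2 * j - N + 1) * p)
      = symZpow q (2 * (2 * p + 1) * j + (2 * p + 1 - 2 * N * p))
        - symZpow q (2 * (-(2 * p - 1)) * j + (-(2 * p - 1) + 2 * N * p)) := by
    intro j
    rw [br_eq_antiZpow, br_eq_antiZpow, antiZpow_mul_antiZpow q_ne_zero]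
    congr 2 <;> ring
  have hplus := antiZpow_mul_sum_symZpow q_ne_zero (2 * p + 1) (2 * p + 1 - 2 * N * p) N
  have hminus := antiZpow_mul_sum_symZpow q_ne_zero (-(2 * p - 1)) (-(2 * p - 1) + 2 * N * p) N
  rw [show (2 * N - 1) * (2 * p + 1) + (2 * p + 1 - 2 * N * p) = 2 * N * (p + 1) by ring,
    show 2 * p + 1 - (2 * p + 1 - 2 * N * p) = 2 * N * p by ring] at hplus
  rw [show (2 * N - 1) * -(2 * p - 1) + (-(2 * p - 1) + 2 * N * p) = -(2 * N * (p - 1)) by ring,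
    show -(2 * p - 1) - (-(2 * p - 1) + 2 * N * p) = -(2 * N * p) by ring,
    antiZpow_neg, antiZpow_neg, antiZpow_neg, ← neg_add, neg_mul, neg_inj] at hminus
  rw [sum_congr rfl fun j _ => hterm j, sum_sub_distrib,
    eq_div_of_mul_eq (br_ne_zero (by omega)) ((mul_comm _ _).trans hplus),
    eq_div_of_mul_eq (br_ne_zero (by omega)) ((mul_comm _ _).trans hminus)]
  rfl

lemma sum_br_even_mul_br (p : ℤ) (N : ℕ) :
    ∑ j ∈ Icc 1 (N - 1), br (2 * j) * br (2 * (2 * j - N) * p)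
      = q ^ (-(2 * p + 1)) * (br (2 * N * (p + 1)) + br (2 * N * p)) / br (2 * p + 1)
        - (q ^ (2 * p - 1) * br (2 * N * (p - 1)) + q ^ (-(2 * p - 1)) * br (2 * N * p))
          / br (2 * p - 1)
        + q ^ (-(2 * N : ℤ)) * br (2 * N * p) := by
  have hd : br (2 * p + 1) ≠ 0 := br_ne_zero (by omega)
  have hd' : br (2 * p - 1) ≠ 0 := br_ne_zero (by omega)
  have hterm : ∀ j : ℕ, br (2 * j) * br (2 * (2 * j - N) * p)
      = symZpow q (2 * (2 * p + 1) * j + -(2 * N * p))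
        - symZpow q (2 * (-(2 * p - 1)) * j + 2 * N * p) := by
    intro j
    rw [br_eq_antiZpow, br_eq_antiZpow, antiZpow_mul_antiZpow q_ne_zero]
    congr 2 <;> ring
  have hplus := antiZpow_mul_sum_symZpow q_ne_zero (2 * p + 1) (-(2 * N * p)) N
  have hminus := antiZpow_mul_sum_symZpow q_ne_zero (-(2 * p - 1)) (2 * N * p) N
  rw [show (2 * N - 1) * (2 * p + 1) + -(2 * N * p) = -(2 * p + 1) + 2 * N * (p + 1) by ring,
    show 2 * p + 1 - -(2 * N * p) = 2 * N * p + (2 * p + 1) by ring,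
    antiZpow_add q_ne_zero (-(2 * p + 1)), antiZpow_add q_ne_zero (2 * N * p),
    antiZpow_neg] at hplus
  rw [show (2 * N - 1) * -(2 * p - 1) + 2 * N * p = -(2 * N * (p - 1) + -(2 * p - 1)) by ring,
    show -(2 * p - 1) - 2 * N * p = -(2 * N * p + (2 * p - 1)) by ring,
    antiZpow_neg, antiZpow_neg, antiZpow_neg, antiZpow_add q_ne_zero (2 * N * (p - 1)),
    antiZpow_add q_ne_zero (2 * N * p), antiZpow_neg, neg_neg] at hminus
  have hshift :
      q ^ (2 * N * (p - 1)) - q ^ (-(2 * N * (p + 1))) = q ^ (-(2 * N : ℤ)) * br (2 * N * p) := by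
    rw [br, mul_sub (q ^ (-(2 * N : ℤ))), ← zpow_add₀ q_ne_zero, ← zpow_add₀ q_ne_zero]
    congr 2 <;> ring
  have hzero : ∑ j ∈ Icc 1 (N - 1), br (2 * j) * br (2 * (2 * j - N) * p)
      = ∑ j ∈ range N, br (2 * j) * br (2 * (2 * j - N) * p) := by
    refine sum_subset (fun j hj => ?_) fun j hj hj' => ?_
    · rw [mem_Icc] at hj
      exact mem_range.2 (by omega)
    · rw [mem_range] at hj
      rw [mem_Icc] at hj'
      rw [show j = 0 by omega, Nat.cast_zero, mul_zero, br_eq_antiZpow, antiZpow_zero, zero_mul]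
  rw [hzero, sum_congr rfl fun j _ => hterm j, sum_sub_distrib,
    eq_div_of_mul_eq hd ((mul_comm _ _).trans hplus),
    eq_div_of_mul_eq (neg_ne_zero.2 hd') ((mul_comm _ _).trans hminus), ← hshift]
  simp only [← br_eq_antiZpow]
  field_simp
  ring

def evalCombination (N : ℕ) : (F → F) →ₗ[F] F where
  toFun g := -(t1 * q ^ (-(2 * (N : ℤ))) + t1⁻¹ * q ^ (2 * (N : ℤ))) * g (-(q ^ (2 * (N : ℤ))))
      + (t1 - t1⁻¹) * ∑ p ∈ Finset.Icc 1 (N - 1),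
          br (2 * (p : ℤ)) * g (-(q ^ (2 * (2 * (p : ℤ) - (N : ℤ)))))
      - (t2 - t2⁻¹) * ∑ p ∈ Finset.range N,
          br (2 * (p : ℤ) + 1) * g (-(q ^ (2 * (2 * (p : ℤ) - (N : ℤ) + 1))))
  map_add' g h := by
    simp only [Pi.add_apply, mul_add, sum_add_distrib]
    ring
  map_smul' r g := by
    simp only [Pi.smul_apply, smul_eq_mul, RingHom.id_apply, mul_left_comm _ r, ← mul_sum]
    ring

lemma evalCombination_antiZpow (p : ℤ) (N : ℕ) :
    evalCombination N (fun c => antiZpow c p) = opImage p (-(q ^ (2 * (N : ℤ)))) := by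
  have hsign : ((-1 : F) ^ (p + 1)) = -(-1) ^ p ∧ ((-1 : F) ^ (p - 1)) = -(-1) ^ p := by
    constructor
    · rw [zpow_add_one₀ (by norm_num), mul_neg_one]
    · rw [zpow_sub_one₀ (by norm_num), inv_neg_one, mul_neg_one]
  have hI0 : br (2 * N * (p + 1)) + br (2 * N * (p - 1))
      = (q ^ (2 * (N : ℤ)) + q ^ (-(2 * (N : ℤ)))) * br (2 * N * p) := by
    rw [mul_add, mul_sub, mul_one]
    exact (antiZpow_mul_symZpow q_ne_zero (2 * N * p) (2 * N)).symm.trans (mul_comm _ _)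
  simp only [evalCombination, LinearMap.coe_mk, AddHom.coe_mk, opImage, antiZpow_neg_base,
    antiZpow_zpow_base, mul_left_comm (br _), ← mul_sum, hsign, ← br_eq_antiZpow]
  rw [sum_br_even_mul_br, sum_br_odd_mul_br, A_add_one, A_eq, A_one_sub,
    show 1 - 2 * p = -(2 * p - 1) by ring]
  linear_combination (-1) ^ p * t1⁻¹ * hI0

lemma fev_eq_sum_smul {n M : ℕ} (h : n ≤ M) :
    fev n = ∑ k ∈ range M, a n (k + 1) • fun c => antiZpow c (k + 1) := by
  funext c
  rw [fev_eq_sum_range h, Finset.sum_apply]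
  rfl

theorem evaluated_recurrence_system_general (n N : ℕ) (hn : 1 ≤ n) :
    fev (n + 1) (-(q ^ (2 * (N : ℤ)))) + fev (n - 1) (-(q ^ (2 * (N : ℤ)))) =
      -(t1 * q ^ (-(2 * (N : ℤ))) + t1⁻¹ * q ^ (2 * (N : ℤ))) * fev n (-(q ^ (2 * (N : ℤ))))
      + (t1 - t1⁻¹) * ∑ p ∈ Finset.Icc 1 (N - 1),
          br (2 * (p : ℤ)) * fev n (-(q ^ (2 * (2 * (p : ℤ) - (N : ℤ)))))
      - (t2 - t2⁻¹) * ∑ p ∈ Finset.range N,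
          br (2 * (p : ℤ) + 1) * fev n (-(q ^ (2 * (2 * (p : ℤ) - (N : ℤ) + 1)))) := by
  obtain ⟨m, rfl⟩ : ∃ m, n = m + 1 := ⟨n - 1, by omega⟩
  change _ = evalCombination N (fev (m + 1))
  rw [Nat.add_sub_cancel, fev_add_fev, fev_eq_sum_smul (by omega : m + 1 ≤ m + 2), map_sum]
  simp only [map_smul, evalCombination_antiZpow, smul_eq_mul]

theorem evaluated_recurrence_system (n N : ℕ) (hn : 1 ≤ n) (hN : 1 ≤ N) :
    fev (n + 1) (-(q ^ (2 * (N : ℤ)))) + fev (n - 1) (-(q ^ (2 * (N : ℤ)))) =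
      -(t1 * q ^ (-(2 * (N : ℤ))) + t1⁻¹ * q ^ (2 * (N : ℤ))) * fev n (-(q ^ (2 * (N : ℤ))))
      + (t1 - t1⁻¹) * ∑ p ∈ Finset.Icc 1 (N - 1),
          br (2 * (p : ℤ)) * fev n (-(q ^ (2 * (2 * (p : ℤ) - (N : ℤ)))))
      - (t2 - t2⁻¹) * ∑ p ∈ Finset.range N,
          br (2 * (p : ℤ) + 1) * fev n (-(q ^ (2 * (2 * (p : ℤ) - (N : ℤ) + 1)))) :=
  evaluated_recurrence_system_general n N hn

end
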